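/- Let r, H > 0 and let C be the Godunov update for parameters r, H. For all a, b ∈ ℝ, min(a, b) < C(a, b) ≤ min(a, b) + rH; in particular the updated value is strictly larger than the smallest neighboring value (causality of the upwind scheme). -/
import Mathlib


/-- The Godunov update for parameters `r, H`: the two-sided quadratic branch when
`|a - b| < r * H`, and the one-sided upwind branch otherwise. -/
noncomputable def godunov (r H a b : ℝ) : ℝ :=
  if |a - b| < r * H then (a + b + Real.sqrt (2 * r ^ 2 * H ^ 2 - (a - b) ^ 2)) / 2
  else min a b + r * H

/-- Causality of the upwind scheme: `min a b < C(a, b) ≤ min a b + rH`. -/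
theorem godunov_causality (r H : ℝ) (hr : 0 < r) (hH : 0 < H) (a b : ℝ) :
    min a b < godunov r H a b ∧ godunov r H a b ≤ min a b + r * H := by
  unfold godunov
  split_ifs with h
  · have hmin : min a b = (a + b - |a - b|) / 2 := by
      rcases abs_cases (a - b) with ⟨h1, _⟩ | ⟨h1, _⟩ <;>
        simp [min_def] <;> split_ifs <;> linarith
    set s := Real.sqrt (2 * r ^ 2 * H ^ 2 - (a - b) ^ 2) with hs
    have habs : 0 ≤ |a - b| := abs_nonneg _
    have hpos : 0 < 2 * r ^ 2 * H ^ 2 - (a - b) ^ 2 := by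
      have h2 : (a - b) ^ 2 < (r * H) ^ 2 := by
        have := sq_lt_sq' (by linarith [neg_abs_le (a - b)] : -(r*H) < a - b)
          (by linarith [le_abs_self (a - b)])
        exact this
      nlinarith [sq_nonneg (r * H)]
    have hspos : 0 < s := Real.sqrt_pos.mpr hpos
    constructor
    · rw [hmin]; linarith
    · rw [hmin]
      have hle : s ≤ 2 * (r * H) - |a - b| := by
        rw [hs]
        have h2 : 0 ≤ 2 * (r * H) - |a - b| := by linarith
        have := Real.sqrt_le_sqrt (show 2 * r ^ 2 * H ^ 2 - (a - b) ^ 2 ≤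
            (2 * (r * H) - |a - b|) ^ 2 by
          nlinarith [sq_abs (a - b), sq_nonneg (r * H - |a - b|)])
        calc Real.sqrt (2 * r ^ 2 * H ^ 2 - (a - b) ^ 2)
            ≤ Real.sqrt ((2 * (r * H) - |a - b|) ^ 2) := this
          _ = 2 * (r * H) - |a - b| := Real.sqrt_sq h2
      linarith
  · constructor
    · nlinarith
    · exact le_rfl
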